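/- Let G₀ be a binary matrix over GF(2) with no zero columns, and let x = δ^(a) ⊗ x^(a) + δ^(b) ⊗ x^(b) with a ≠ b, where δ^(j) is the j-th standard basis vector and x^(a), x^(b) are nonzero binary vectors. Then (G₀ ⊗ I)·x = 0 over GF(2) if and only if G₀·δ^(a) = G₀·δ^(b) and x^(a) = x^(b). -/

import Mathlib

open Matrix

/-- Tensor (Kronecker) product of two vectors over `ZMod 2`. -/
def vecTensor {n N : ℕ} (u : Fin n → ZMod 2) (f : Fin N → ZMod 2) :
    Fin n × Fin N → ZMod 2 := fun p => u p.1 * f p.2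

lemma kron_tensor_entry {m n N : ℕ} (G₀ : Matrix (Fin m) (Fin n) (ZMod 2))
    (a : Fin n) (xa : Fin N → ZMod 2) (i : Fin m) (k : Fin N) :
    (Matrix.kroneckerMap (· * ·) G₀ (1 : Matrix (Fin N) (Fin N) (ZMod 2))).mulVec
        (vecTensor (Pi.single a 1) xa) (i, k) = G₀ i a * xa k := by
  simp [Matrix.mulVec, dotProduct, Fintype.sum_prod_type, vecTensor,
    Matrix.one_apply, Pi.single_apply, mul_ite, ite_mul, mul_comm, mul_assoc]

lemma zmod2_one_of_ne_zero (x : ZMod 2) (h : x ≠ 0) : x = 1 := by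
  fin_cases x
  · exact absurd rfl h
  · rfl

lemma zmod2_neg (x : ZMod 2) : -x = x := by fin_cases x <;> rfl

/-- If `G₀` has no zero columns and `x = δ^(a) ⊗ x^(a) + δ^(b) ⊗ x^(b)` with `a ≠ b`
and `x^(a), x^(b)` nonzero, then `(G₀ ⊗ I)·x = 0` over `GF(2)` iff
`G₀·δ^(a) = G₀·δ^(b)` and `x^(a) = x^(b)`. -/
theorem two_branch_detection {m n N : ℕ} (G₀ : Matrix (Fin m) (Fin n) (ZMod 2))
    (hcols : ∀ j : Fin n, (fun i => G₀ i j) ≠ 0)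
    (a b : Fin n) (hab : a ≠ b)
    (xa xb : Fin N → ZMod 2) (hxa : xa ≠ 0) (hxb : xb ≠ 0) :
    (Matrix.kroneckerMap (· * ·) G₀ (1 : Matrix (Fin N) (Fin N) (ZMod 2))).mulVec
        (vecTensor (Pi.single a 1) xa + vecTensor (Pi.single b 1) xb) = 0 ↔
      (G₀.mulVec (Pi.single a 1) = G₀.mulVec (Pi.single b 1) ∧ xa = xb) := by
  have hentry : ∀ i k,
      (Matrix.kroneckerMap (· * ·) G₀ (1 : Matrix (Fin N) (Fin N) (ZMod 2))).mulVec
        (vecTensor (Pi.single a 1) xa + vecTensor (Pi.single b 1) xb) (i, k)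
      = G₀ i a * xa k + G₀ i b * xb k := by
    intro i k
    rw [Matrix.mulVec_add]
    simp [kron_tensor_entry]
  have hkey : ((Matrix.kroneckerMap (· * ·) G₀
        (1 : Matrix (Fin N) (Fin N) (ZMod 2))).mulVec
        (vecTensor (Pi.single a 1) xa + vecTensor (Pi.single b 1) xb) = 0)
      ↔ (∀ i k, G₀ i a * xa k + G₀ i b * xb k = 0) := by
    constructor
    · intro h i k
      have := congrFun h (i, k)
      rwa [hentry] at this
    · intro h
      funext p
      obtain ⟨i, k⟩ := p
      rw [hentry]; exact h i k
  rw [hkey]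
  have hmv : ∀ (j : Fin n) (i : Fin m), G₀.mulVec (Pi.single j 1) i = G₀ i j := by
    intro j i
    simp [Matrix.mulVec, dotProduct, Pi.single_apply, mul_ite]
  constructor
  · intro h
    -- find k₀ with xa k₀ = 1
    obtain ⟨k₀, hk₀⟩ : ∃ k, xa k ≠ 0 := by
      by_contra hc
      push_neg at hc
      exact hxa (funext hc)
    have hk₀1 : xa k₀ = 1 := zmod2_one_of_ne_zero _ hk₀
    obtain ⟨k₁, hk₁⟩ : ∃ k, xb k ≠ 0 := by
      by_contra hc
      push_neg at hc
      exact hxb (funext hc)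
    have hk₁1 : xb k₁ = 1 := zmod2_one_of_ne_zero _ hk₁
    -- show xb k₀ = 1, else column a would be zero
    have hxbk₀ : xb k₀ = 1 := by
      by_contra hne
      have hz : xb k₀ = 0 := by
        have := zmod2_one_of_ne_zero (xb k₀)
        by_contra hz'
        exact hne (this hz')
      apply hcols a
      funext i
      have := h i k₀
      rw [hk₀1, hz] at this
      simpa using this
    -- column equality
    have hcol : ∀ i, G₀ i a = G₀ i b := by
      intro i
      have := h i k₀
      rw [hk₀1, hxbk₀, mul_one, mul_one] at this
      have h2 : G₀ i a = -(G₀ i b) := by linear_combination this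
      rw [zmod2_neg] at h2; exact h2
    refine ⟨by funext i; rw [hmv, hmv, hcol], ?_⟩
    -- xa = xb: pick i₀ with G₀ i₀ a = 1
    obtain ⟨i₀, hi₀⟩ : ∃ i, G₀ i a ≠ 0 := by
      by_contra hc
      push_neg at hc
      exact hcols a (funext hc)
    have hi₀1 : G₀ i₀ a = 1 := zmod2_one_of_ne_zero _ hi₀
    funext k
    have := h i₀ k
    rw [hcol i₀] at hi₀1
    rw [hi₀1] at this
    rw [hcol i₀, hi₀1, one_mul, one_mul] at this
    have h2 : xa k = -(xb k) := by linear_combination this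
    rw [zmod2_neg] at h2; exact h2
  · rintro ⟨hG, hx⟩ i k
    have hGi : G₀ i a = G₀ i b := by
      have := congrFun hG i
      rwa [hmv, hmv] at this
    rw [hGi, hx]
    have : ∀ x : ZMod 2, x + x = 0 := by decide
    exact this _
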